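/- arXiv:1503.04026 — 2 statements merged into one kernel-verified Lean document; each statement's English description precedes it below -/
import Mathlib

section
/- Let λ_1, …, λ_m ∈ ℂ be distinct complex numbers with pairwise distinct real parts, let A_1, …, A_m be polynomials with complex coefficients, not all zero, and set y(z) = Σ_{j=1}^m A_j(z) e^{λ_j z}. Then for every α ≥ 0 the set of zeros of y in the closed horizontal strip Π_α = {z ∈ ℂ : |Im z| ≤ α} is finite. -/
/-!
On a horizontal strip, `|e^{λz}|` is comparable to `e^{(Re λ) Re z}`. So as `Re z → +∞` in the
strip, the term whose exponent has the largest real part among those with `A_j ≠ 0` dominates: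
dividing `y` by its exponential leaves a nonzero polynomial, bounded away from `0` at infinity,
plus polynomials times decaying exponentials. Hence `y` has no zeros in the strip far to the
right and, applied to `y(-z)`, none far to the left. The zeros in the strip therefore lie in a
compact set, and since `y` is entire and not identically zero, there are finitely many of them.
-/

open Filter Topology Polynomial Finset

noncomputable def expPoly {ι : Type*} (s : Finset ι) (A : ι → ℂ[X]) (l : ι → ℂ) (z : ℂ) : ℂ :=
  ∑ j ∈ s, (A j).eval z * Complex.exp (l j * z)

def stripAtTop (α : ℝ) : Filter ℂ :=
  comap Complex.re atTop ⊓ 𝓟 {z | |z.im| ≤ α}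

section stripAtTop

variable (α : ℝ)

theorem tendsto_re_stripAtTop : Tendsto Complex.re (stripAtTop α) atTop :=
  tendsto_comap.mono_left inf_le_left

theorem eventually_abs_im_le_stripAtTop : ∀ᶠ z in stripAtTop α, |z.im| ≤ α :=
  mem_inf_of_right (mem_principal_self _)

theorem tendsto_norm_stripAtTop : Tendsto (‖·‖) (stripAtTop α) atTop :=
  tendsto_atTop_mono Complex.re_le_norm (tendsto_re_stripAtTop α)

variable {α} in
theorem eventually_stripAtTop_iff {p : ℂ → Prop} :
    (∀ᶠ z in stripAtTop α, p z) ↔ ∃ R, ∀ z : ℂ, |z.im| ≤ α → R ≤ z.re → p z := by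
  simp only [stripAtTop, eventually_inf_principal, eventually_comap, eventually_atTop,
    Set.mem_ofPred_eq]
  exact ⟨fun ⟨R, hR⟩ => ⟨R, fun z him hre => hR _ hre z rfl him⟩,
    fun ⟨R, hR⟩ => ⟨R, fun x hx z hz him => hR z him (hz ▸ hx)⟩⟩

end stripAtTop

theorem norm_exp_mul_le_of_abs_im_le {α : ℝ} (β : ℂ) {z : ℂ} (hz : |z.im| ≤ α) :
    ‖Complex.exp (β * z)‖ ≤ Real.exp (|β.im| * α) * Real.exp (β.re * z.re) := by
  rw [Complex.norm_exp, ← Real.exp_add, Real.exp_le_exp, Complex.mul_re]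
  have : -(β.im * z.im) ≤ |β.im| * α :=
    calc -(β.im * z.im) ≤ |β.im| * |z.im| := (neg_le_abs _).trans (abs_mul _ _).le
      _ ≤ |β.im| * α := mul_le_mul_of_nonneg_left hz (abs_nonneg _)
  linarith

theorem tendsto_pow_mul_exp_stripAtTop (α : ℝ) (n : ℕ) {β : ℂ} (hβ : β.re < 0) :
    Tendsto (fun z : ℂ => z ^ n * Complex.exp (β * z)) (stripAtTop α) (𝓝 0) := by
  have hreal : Tendsto (fun x : ℝ => 2 ^ n * Real.exp (|β.im| * α) *
      (x ^ (n : ℝ) * Real.exp (-(-β.re) * x))) atTop (𝓝 0) := by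
    simpa using (tendsto_rpow_mul_exp_neg_mul_atTop_nhds_zero n (-β.re) (by linarith)).const_mul
      (2 ^ n * Real.exp (|β.im| * α))
  refine squeeze_zero_norm' ?_ (hreal.comp (tendsto_re_stripAtTop α))
  filter_upwards [eventually_abs_im_le_stripAtTop α,
    (tendsto_re_stripAtTop α).eventually_ge_atTop α,
    (tendsto_re_stripAtTop α).eventually_ge_atTop 0] with z him hαre hre
  have hz : ‖z‖ ≤ 2 * z.re :=
    calc ‖z‖ ≤ |z.re| + |z.im| := Complex.norm_le_abs_re_add_abs_im z
      _ ≤ 2 * z.re := by rw [abs_of_nonneg hre]; linarith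
  rw [norm_mul, norm_pow, Function.comp_apply, Real.rpow_natCast, neg_neg]
  calc ‖z‖ ^ n * ‖Complex.exp (β * z)‖
      ≤ (2 * z.re) ^ n * (Real.exp (|β.im| * α) * Real.exp (β.re * z.re)) :=
        mul_le_mul (pow_le_pow_left₀ (norm_nonneg _) hz n) (norm_exp_mul_le_of_abs_im_le β him)
          (norm_nonneg _) (by positivity)
    _ = _ := by ring

theorem tendsto_eval_mul_exp_stripAtTop (α : ℝ) (p : ℂ[X]) {β : ℂ} (hβ : β.re < 0) :
    Tendsto (fun z : ℂ => p.eval z * Complex.exp (β * z)) (stripAtTop α) (𝓝 0) := by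
  have := tendsto_finsetSum (range (p.natDegree + 1)) fun i _ =>
    (tendsto_pow_mul_exp_stripAtTop α i hβ).const_mul (p.coeff i)
  simp only [mul_zero, sum_const_zero] at this
  refine this.congr fun z => ?_
  rw [eval_eq_sum_range, sum_mul]
  exact sum_congr rfl fun i _ => by ring

theorem tendsto_expPoly_stripAtTop {ι : Type*} (α : ℝ) (s : Finset ι) (A : ι → ℂ[X])
    {l : ι → ℂ} (hl : ∀ j ∈ s, (l j).re < 0) :
    Tendsto (expPoly s A l) (stripAtTop α) (𝓝 0) := by
  have := tendsto_finsetSum s fun j hj => tendsto_eval_mul_exp_stripAtTop α (A j) (hl j hj)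
  rwa [sum_const_zero] at this

theorem Polynomial.exists_pos_eventually_le_norm_eval {R : Type*} [NormedRing R]
    [IsAbsoluteValue (norm : R → ℝ)] {p : R[X]} (hp : p ≠ 0) {l : Filter R}
    (hl : Tendsto (‖·‖) l atTop) : ∃ c > 0, ∀ᶠ z in l, c ≤ ‖p.eval z‖ := by
  rcases lt_or_ge 0 p.degree with hdeg | hdeg
  · exact ⟨1, one_pos, (p.tendsto_norm_atTop hdeg hl).eventually_ge_atTop 1⟩
  · rw [eq_C_of_degree_le_zero hdeg] at hp ⊢
    exact ⟨_, norm_pos_iff.2 (C_ne_zero.1 hp), .of_forall fun z => by rw [eval_C]⟩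

theorem expPoly_filter_ne_zero {ι : Type*} (s : Finset ι) (A : ι → ℂ[X]) (l : ι → ℂ) :
    expPoly (s.filter (A · ≠ 0)) A l = expPoly s A l :=
  funext fun _ => sum_filter_of_ne fun j _ hj hAj => hj (by rw [hAj, eval_zero, zero_mul])

theorem expPoly_eq_exp_mul_add {ι : Type*} [DecidableEq ι] {s : Finset ι} {j₀ : ι}
    (hj₀ : j₀ ∈ s) (A : ι → ℂ[X]) (l : ι → ℂ) (z : ℂ) :
    expPoly s A l z = Complex.exp (l j₀ * z) *
      ((A j₀).eval z + expPoly (s.erase j₀) A (fun j => l j - l j₀) z) := by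
  rw [expPoly, expPoly, ← add_sum_erase _ _ hj₀, mul_add, mul_sum]
  congr 1
  · ring
  · refine sum_congr rfl fun j _ => ?_
    rw [mul_left_comm, ← Complex.exp_add]
    ring_nf

theorem expPoly_neg {ι : Type*} (s : Finset ι) (A : ι → ℂ[X]) (l : ι → ℂ) (z : ℂ) :
    expPoly s (fun j => (A j).comp (-X)) (fun j => -l j) (-z) = expPoly s A l z := by
  simp [expPoly, eval_comp]

theorem differentiable_expPoly {ι : Type*} (s : Finset ι) (A : ι → ℂ[X]) (l : ι → ℂ) :
    Differentiable ℂ (expPoly s A l) := by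
  unfold expPoly
  fun_prop

theorem eventually_expPoly_ne_zero_stripAtTop {ι : Type*} (α : ℝ) {s : Finset ι}
    {A : ι → ℂ[X]} {l : ι → ℂ} (hre : Set.InjOn (fun j => (l j).re) s)
    (hA : ∃ j ∈ s, A j ≠ 0) :
    ∀ᶠ z in stripAtTop α, expPoly s A l z ≠ 0 := by
  classical
  set S := s.filter (A · ≠ 0)
  obtain ⟨j₀, hj₀S, hmax⟩ := S.exists_max_image (fun j => (l j).re)
    (let ⟨j, hj, hAj⟩ := hA; ⟨j, mem_filter.2 ⟨hj, hAj⟩⟩)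
  have hneg : ∀ j ∈ S.erase j₀, (l j - l j₀).re < 0 := by
    intro j hj
    obtain ⟨hne, hjS⟩ := mem_erase.1 hj
    rw [Complex.sub_re, sub_neg]
    exact (hmax j hjS).lt_of_ne fun h => hne (hre (mem_filter.1 hjS).1 (mem_filter.1 hj₀S).1 h)
  obtain ⟨c, hc, hlead⟩ := exists_pos_eventually_le_norm_eval (mem_filter.1 hj₀S).2
    (tendsto_norm_stripAtTop α)
  have htail := (tendsto_expPoly_stripAtTop α (S.erase j₀) A hneg).norm.eventually
    (gt_mem_nhds (by rwa [norm_zero]) : ∀ᶠ x in 𝓝 ‖(0 : ℂ)‖, x < c)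
  filter_upwards [hlead, htail] with z hlead htail
  rw [← expPoly_filter_ne_zero, expPoly_eq_exp_mul_add hj₀S]
  refine mul_ne_zero (Complex.exp_ne_zero _) fun h => ?_
  rw [add_eq_zero_iff_eq_neg.1 h, norm_neg] at hlead
  linarith

theorem exists_abs_re_le_of_expPoly_eq_zero {ι : Type*} (α : ℝ) {s : Finset ι}
    {A : ι → ℂ[X]} {l : ι → ℂ} (hre : Set.InjOn (fun j => (l j).re) s)
    (hA : ∃ j ∈ s, A j ≠ 0) :
    ∃ R, ∀ z : ℂ, |z.im| ≤ α → expPoly s A l z = 0 → |z.re| ≤ R := by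
  obtain ⟨R₁, hR₁⟩ :=
    eventually_stripAtTop_iff.1 (eventually_expPoly_ne_zero_stripAtTop α hre hA)
  have hre' : Set.InjOn (fun j => (-l j).re) s := fun i hi j hj h =>
    hre hi hj (by simpa using h)
  have hA' : ∃ j ∈ s, (A j).comp (-X) ≠ 0 :=
    let ⟨j, hj, hAj⟩ := hA
    ⟨j, hj, fun h => hAj (by simpa [comp_neg_X_comp_neg_X] using congrArg (·.comp (-X)) h)⟩
  obtain ⟨R₂, hR₂⟩ :=
    eventually_stripAtTop_iff.1 (eventually_expPoly_ne_zero_stripAtTop α hre' hA')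
  refine ⟨max R₁ R₂, fun z him hz => abs_le.2 ⟨?_, ?_⟩⟩
  · by_contra! h
    refine hR₂ (-z) (by simpa using him) ?_ (by rwa [expPoly_neg])
    rw [Complex.neg_re]
    linarith [le_max_right R₁ R₂]
  · by_contra! h
    exact hR₁ z him (by linarith [le_max_left R₁ R₂]) hz

theorem Differentiable.finite_inter_preimage_zero_of_isCompact {E : Type*}
    [NormedAddCommGroup E] [NormedSpace ℂ E] [CompleteSpace E] {f : ℂ → E}
    (hf : Differentiable ℂ f) {z₀ : ℂ} (hz₀ : f z₀ ≠ 0) {K : Set ℂ} (hK : IsCompact K) :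
    (K ∩ f ⁻¹' {0}).Finite := by
  by_contra hinf
  obtain ⟨x, -, hacc⟩ := Set.Infinite.exists_accPt_of_subset_isCompact hinf hK
    Set.inter_subset_left
  have hfreq : ∃ᶠ z in 𝓝[≠] x, f z = 0 := by
    rw [frequently_nhdsWithin_iff]
    exact (accPt_iff_frequently.1 hacc).mono fun z hz => ⟨hz.2.2, hz.1⟩
  have hentire : AnalyticOnNhd ℂ f Set.univ := hf.differentiableOn.analyticOnNhd isOpen_univ
  exact hz₀ (hentire.eqOn_zero_of_preconnected_of_frequently_eq_zero isPreconnected_univ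
    (Set.mem_univ x) hfreq (Set.mem_univ z₀))

theorem stmt_1_general (m : ℕ) (l : ℕ → ℂ)
    (hre : ∀ i j, i < m → j < m → i ≠ j → (l i).re ≠ (l j).re)
    (A : ℕ → Polynomial ℂ) (hA : ∃ j, j < m ∧ A j ≠ 0) :
    ∀ α : ℝ, 0 ≤ α →
      {z : ℂ | |z.im| ≤ α ∧
        ∑ j ∈ Finset.range m, (A j).eval z * Complex.exp (l j * z) = 0}.Finite := by
  intro α _
  have hinj : Set.InjOn (fun j => (l j).re) (range m) := fun i hi j hj h =>
    by_contra (hre i j (mem_range.1 hi) (mem_range.1 hj) · h)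
  have hA' : ∃ j ∈ range m, A j ≠ 0 := let ⟨j, hj, hAj⟩ := hA; ⟨j, mem_range.2 hj, hAj⟩
  obtain ⟨R₀, hR₀⟩ :=
    eventually_stripAtTop_iff.1 (eventually_expPoly_ne_zero_stripAtTop 0 hinj hA')
  obtain ⟨R, hR⟩ := exists_abs_re_le_of_expPoly_eq_zero α hinj hA'
  refine ((differentiable_expPoly (range m) A l).finite_inter_preimage_zero_of_isCompact
    (hR₀ R₀ (by simp) (by simp)) (isCompact_closedBall 0 (R + α))).subset ?_
  rintro z ⟨him, hz⟩
  refine ⟨?_, hz⟩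
  rw [Metric.mem_closedBall, dist_zero_right]
  linarith [Complex.norm_le_abs_re_add_abs_im z, hR z him hz]

/-- An exponential polynomial `y(z) = Σ_j A_j(z) e^{λ_j z}` with the `λ_j`
distinct and with pairwise distinct real parts and the `A_j` not all zero has finitely many
zeros in every closed horizontal strip `{z : |Im z| ≤ α}`. -/
theorem stmt_1 (m : ℕ) (l : ℕ → ℂ)
    (hdist : ∀ i j, i < m → j < m → i ≠ j → l i ≠ l j)
    (hre : ∀ i j, i < m → j < m → i ≠ j → (l i).re ≠ (l j).re)
    (A : ℕ → Polynomial ℂ) (hA : ∃ j, j < m ∧ A j ≠ 0) :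
    ∀ α : ℝ, 0 ≤ α →
      {z : ℂ | |z.im| ≤ α ∧
        ∑ j ∈ Finset.range m, (A j).eval z * Complex.exp (l j * z) = 0}.Finite :=
  stmt_1_general m l hre A hA
end

section
/- Let k ≥ 2, let λ_1, …, λ_k ∈ ℂ with Re λ_1 < Re λ_2 < … < Re λ_k, let a_1, …, a_k be nonzero complex numbers, and set y(z) = Σ_{j=1}^k a_j e^{λ_j z}. Let φ_0 be the least concave majorant of the points (Re λ_j, ln|a_j|), and for j = 1,…,k−1 set s_j := (φ_0(Re λ_{j+1}) − φ_0(Re λ_j)) / (Re λ_{j+1} − Re λ_j). If u ∈ ℝ satisfies |−u − s_j| > (ln 4)·Θ for every j = 1,…,k−1, then u ∈ G(y,0). -/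
/-!
Put `m j = ln|a_j| + u Re λ_j`, so that `|a_j e^{λ_j u}| = e^{m j}`, and
`g j = φ_0(Re λ_j) + u Re λ_j`, so that `m ≤ g`. The increments of `g` are
`(s_j + u)(Re λ_{j+1} - Re λ_j)`: by hypothesis each has absolute value at least `ln 4`, and since
`φ_0` is concave the slopes `s_j` decrease, so `g` climbs to a peak `i` and then falls, by at least
`ln 4` per step. The affine function `μ ↦ max m - u μ` is a concave majorant of the data, so
`g i ≤ max m`; this forces the maximum of `m` to sit at `i`, with `m i = g i`. Hence
`|a_j e^{λ_j u}| ≤ 4^{-|j - i|} |a_i e^{λ_i u}|`, and the other terms add up to at most `2/3` of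
the `i`-th.
-/

/-- The least concave majorant of the points `(x j, y j)`, `j < k`, on the interval `[a, b]`:
its value at `μ` is the infimum of `ψ μ` over all functions `ψ : ℝ → ℝ` concave on `[a, b]`
with `ψ (x j) ≥ y j` for all `j < k`. -/
noncomputable def leastConcaveMajorant (a b : ℝ) (k : ℕ) (x y : ℕ → ℝ) (μ : ℝ) : ℝ :=
  sInf {t : ℝ | ∃ ψ : ℝ → ℝ, ConcaveOn ℝ (Set.Icc a b) ψ ∧
    (∀ j < k, y j ≤ ψ (x j)) ∧ t = ψ μ}

open Finset

section LeastConcaveMajorant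

variable {a b : ℝ} {k : ℕ} {x y : ℕ → ℝ}

lemma leastConcaveMajorant_set_nonempty (μ : ℝ) :
    {t : ℝ | ∃ ψ : ℝ → ℝ, ConcaveOn ℝ (Set.Icc a b) ψ ∧
      (∀ j < k, y j ≤ ψ (x j)) ∧ t = ψ μ}.Nonempty :=
  ⟨_, fun _ => ∑ i ∈ range k, |y i|, concaveOn_const _ (convex_Icc a b),
    fun _ hj => (le_abs_self _).trans
      (single_le_sum (fun i _ => abs_nonneg (y i)) (mem_range.mpr hj)), rfl⟩

lemma le_leastConcaveMajorant {j : ℕ} (hj : j < k) :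
    y j ≤ leastConcaveMajorant a b k x y (x j) :=
  le_csInf (leastConcaveMajorant_set_nonempty _) <| by
    rintro _ ⟨ψ, -, hψ, rfl⟩
    exact hψ j hj

lemma leastConcaveMajorant_le (hk : 0 < k) {μ : ℝ} (hμ : μ ∈ Set.Icc (x 0) (x (k - 1)))
    {ψ : ℝ → ℝ} (hψ : ConcaveOn ℝ (Set.Icc (x 0) (x (k - 1))) ψ)
    (hmaj : ∀ j < k, y j ≤ ψ (x j)) :
    leastConcaveMajorant (x 0) (x (k - 1)) k x y μ ≤ ψ μ := by
  have hx : x 0 ≤ x (k - 1) := hμ.1.trans hμ.2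
  refine csInf_le ⟨min (y 0) (y (k - 1)), ?_⟩ ⟨ψ, hψ, hmaj, rfl⟩
  rintro _ ⟨ψ', hψ', hmaj', rfl⟩
  calc min (y 0) (y (k - 1)) ≤ min (ψ' (x 0)) (ψ' (x (k - 1))) :=
        min_le_min (hmaj' 0 hk) (hmaj' (k - 1) (by omega))
    _ ≤ ψ' μ := hψ'.min_le_of_mem_Icc (Set.left_mem_Icc.mpr hx) (Set.right_mem_Icc.mpr hx) hμ

lemma concaveOn_leastConcaveMajorant (hk : 0 < k) :
    ConcaveOn ℝ (Set.Icc (x 0) (x (k - 1))) (leastConcaveMajorant (x 0) (x (k - 1)) k x y) := by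
  refine ⟨convex_Icc _ _, fun p hp q hq α β hα hβ hαβ => ?_⟩
  refine le_csInf (leastConcaveMajorant_set_nonempty _) ?_
  rintro _ ⟨ψ, hψ, hmaj, rfl⟩
  calc α • leastConcaveMajorant (x 0) (x (k - 1)) k x y p
        + β • leastConcaveMajorant (x 0) (x (k - 1)) k x y q ≤ α • ψ p + β • ψ q := by
        gcongr
        exacts [leastConcaveMajorant_le hk hp hψ hmaj, leastConcaveMajorant_le hk hq hψ hmaj]
    _ ≤ ψ (α • p + β • q) := hψ.2 hp hq hα hβ hαβ

lemma leastConcaveMajorant_add_mul_le (hk : 0 < k) {μ : ℝ} (hμ : μ ∈ Set.Icc (x 0) (x (k - 1)))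
    {u M : ℝ} (hM : ∀ j < k, y j + u * x j ≤ M) :
    leastConcaveMajorant (x 0) (x (k - 1)) k x y μ + u * μ ≤ M := by
  have hconc : ConcaveOn ℝ (Set.Icc (x 0) (x (k - 1))) fun μ => M - u * μ :=
    (concaveOn_const _ (convex_Icc _ _)).sub
      (LinearMap.convexOn (LinearMap.mulLeft ℝ u) (convex_Icc _ _))
  have := leastConcaveMajorant_le (y := y) hk hμ hconc fun j hj =>
    show y j ≤ M - u * x j by linarith [hM j hj]
  linarith

end LeastConcaveMajorant

lemma mem_Icc_of_lt_succ {β : Type*} [Preorder β] {X : ℕ → β} {n j : ℕ}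
    (hX : ∀ t, t + 1 < n → X t < X (t + 1)) (hj : j < n) : X j ∈ Set.Icc (X 0) (X (n - 1)) := by
  have hXmono := (strictMonoOn_Iic_of_lt_succ (ψ := X) (n := n - 1) fun t ht => by
    simpa [Order.succ_eq_add_one] using hX t (by omega)).monotoneOn
  exact ⟨hXmono (Set.mem_Iic.mpr (Nat.zero_le _)) (Set.mem_Iic.mpr (by omega)) (Nat.zero_le j),
    hXmono (Set.mem_Iic.mpr (by omega)) (Set.mem_Iic.mpr le_rfl) (by omega)⟩

lemma le_abs_mul_of_inv_le_of_mul_lt {c d s Θ : ℝ} (hc : 0 ≤ c) (hd : 0 < d) (hΘ : d⁻¹ ≤ Θ)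
    (hs : c * Θ < |s|) : c ≤ |s| * d :=
  calc c = c * d⁻¹ * d := by field_simp
    _ ≤ c * Θ * d := by gcongr
    _ ≤ |s| * d := by gcongr

section Peak

variable {g : ℕ → ℝ} {c : ℝ}

lemma add_mul_sub_le_of_add_le_succ {i j : ℕ} (hji : j ≤ i)
    (hg : ∀ t, j ≤ t → t < i → g t + c ≤ g (t + 1)) : g j + c * (i - j : ℕ) ≤ g i := by
  induction i, hji using Nat.le_induction with
  | base => simp
  | succ i hji ih =>
    have hstep := hg i hji (by omega)
    have hprev := ih fun t h1 h2 => hg t h1 (by omega)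
    rw [Nat.succ_sub hji]
    push_cast
    linarith

lemma add_mul_dist_le_of_rise_fall {n i : ℕ} (hrise : ∀ t < i, g t + c ≤ g (t + 1))
    (hfall : ∀ t, i ≤ t → t + 1 < n → g (t + 1) + c ≤ g t) :
    ∀ j < n, g j + c * Nat.dist j i ≤ g i := by
  intro j hj
  rcases le_total j i with hji | hij
  · rw [Nat.dist_eq_sub_of_le hji]
    exact add_mul_sub_le_of_add_le_succ hji fun t _ ht => hrise t ht
  · rw [Nat.dist_eq_sub_of_le_right hij]
    have := add_mul_sub_le_of_add_le_succ (g := fun t => -g t) (c := c) hij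
      fun t hit htj => by linarith [hfall t hit (by omega)]
    linarith

lemma exists_add_mul_dist_le_of_steps {n : ℕ} (hn : 0 < n)
    (hstep : ∀ t, t + 1 < n → c ≤ |g (t + 1) - g t|)
    (hsign : ∀ t, t + 2 < n → g (t + 1) < g t → g (t + 2) < g (t + 1)) :
    ∃ i < n, ∀ j < n, g j + c * Nat.dist j i ≤ g i := by
  classical
  by_cases hdesc : ∃ t, t + 1 < n ∧ g (t + 1) < g t
  · obtain ⟨hin, hi⟩ := Nat.find_spec hdesc
    refine ⟨Nat.find hdesc, by omega, add_mul_dist_le_of_rise_fall (fun t ht => ?_) ?_⟩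
    · have hup : g t ≤ g (t + 1) := by
        by_contra! hlt
        exact Nat.find_min hdesc ht ⟨by omega, hlt⟩
      linarith [abs_of_nonneg (sub_nonneg.mpr hup) ▸ hstep t (by omega)]
    · have hdown : ∀ t, Nat.find hdesc ≤ t → t + 1 < n → g (t + 1) < g t := by
        intro t ht
        induction t, ht using Nat.le_induction with
        | base => exact fun _ => hi
        | succ t _ ih => exact fun htn => hsign t htn (ih (by omega))
      intro t hit htn
      linarith [abs_of_neg (sub_neg.mpr (hdown t hit htn)) ▸ hstep t htn]
  · push Not at hdesc
    refine ⟨n - 1, by omega, add_mul_dist_le_of_rise_fall (fun t ht => ?_) ?_⟩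
    · linarith [abs_of_nonneg (sub_nonneg.mpr (hdesc t (by omega))) ▸ hstep t (by omega)]
    · intro t hit htn
      omega

lemma exists_peak_of_concaveOn {s : Set ℝ} {φ : ℝ → ℝ} {X : ℕ → ℝ} {n : ℕ} (hn : 0 < n)
    (hφ : ConcaveOn ℝ s φ) (hXs : ∀ j < n, X j ∈ s) (hX : ∀ t, t + 1 < n → X t < X (t + 1))
    (u : ℝ) (hgap : ∀ t, t + 1 < n → c ≤ |slope φ (X t) (X (t + 1)) + u| * (X (t + 1) - X t)) :
    ∃ i < n, ∀ j < n, φ (X j) + u * X j + c * Nat.dist j i ≤ φ (X i) + u * X i := by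
  have hdiff : ∀ t, t + 1 < n → φ (X (t + 1)) + u * X (t + 1) - (φ (X t) + u * X t)
      = (slope φ (X t) (X (t + 1)) + u) * (X (t + 1) - X t) := by
    intro t ht
    have := sub_ne_zero.mpr (hX t ht).ne'
    rw [slope_def_field]
    field_simp
    ring
  refine exists_add_mul_dist_le_of_steps (g := fun j => φ (X j) + u * X j) hn
    (fun t ht => ?_) (fun t ht hdesc => ?_)
  · rw [hdiff t ht, abs_mul, abs_of_pos (sub_pos.mpr (hX t ht))]
    exact hgap t ht
  · have hgap₁ := sub_pos.mpr (hX t (by omega))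
    have hgap₂ := sub_pos.mpr (hX (t + 1) ht)
    have hneg : slope φ (X t) (X (t + 1)) + u < 0 := by
      have := hdiff t (by omega)
      nlinarith
    have hanti : slope φ (X (t + 1)) (X (t + 2)) ≤ slope φ (X t) (X (t + 1)) := by
      simp only [slope_def_field]
      exact hφ.slope_anti_adjacent (hXs t (by omega)) (hXs (t + 2) ht) (hX t (by omega))
        (hX (t + 1) ht)
    have := hdiff (t + 1) ht
    nlinarith

end Peak

lemma add_mul_dist_le_of_le_of_peak {m g : ℕ → ℝ} {n i : ℕ} {c : ℝ} (hc : 0 < c)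
    (hmg : ∀ j < n, m j ≤ g j) (hpeak : ∀ j < n, g j + c * Nat.dist j i ≤ g i)
    (htop : ∃ j₀ < n, g i ≤ m j₀) :
    ∀ j < n, m j + c * Nat.dist j i ≤ m i := by
  obtain ⟨j₀, hj₀, hgi⟩ := htop
  have hdist : (Nat.dist j₀ i : ℝ) ≤ 0 := by
    nlinarith [hmg j₀ hj₀, hpeak j₀ hj₀]
  obtain rfl : j₀ = i := Nat.eq_of_dist_eq_zero (by exact_mod_cast hdist.antisymm (by positivity))
  intro j hj
  linarith [hmg j hj, hpeak j hj]

lemma sum_erase_pow_dist_le {r : ℝ} (hr₀ : 0 ≤ r) (hr₁ : r < 1) (n i : ℕ) :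
    ∑ j ∈ (range n).erase i, r ^ Nat.dist j i ≤ 2 * (r / (1 - r)) := by
  have hsplit : (range n).erase i ⊆ range i ∪ Ico (i + 1) n := by
    intro j
    simp only [mem_erase, mem_range, mem_union, mem_Ico]
    omega
  have hleft : ∑ j ∈ range i, r ^ Nat.dist j i ≤ r / (1 - r) := by
    rw [← sum_range_reflect]
    calc ∑ j ∈ range i, r ^ Nat.dist (i - 1 - j) i = ∑ d ∈ Ico 1 (i + 1), r ^ d := by
          rw [sum_Ico_eq_sum_range, Nat.add_sub_cancel]
          refine sum_congr rfl fun j hj => ?_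
          rw [Nat.dist_eq_sub_of_le (by omega)]
          congr 1
          have := mem_range.mp hj
          omega
      _ ≤ r / (1 - r) := by simpa using geom_sum_Ico_le_of_lt_one (m := 1) hr₀ hr₁
  have hright : ∑ j ∈ Ico (i + 1) n, r ^ Nat.dist j i ≤ r / (1 - r) := by
    calc ∑ j ∈ Ico (i + 1) n, r ^ Nat.dist j i
        = ∑ d ∈ Ico 1 (n - i), r ^ d := by
          rw [sum_Ico_eq_sum_range, sum_Ico_eq_sum_range]
          refine sum_congr (congrArg range (by omega)) fun j _ => ?_
          rw [Nat.dist_eq_sub_of_le_right (by omega)]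
          congr 1
          omega
      _ ≤ r / (1 - r) := by simpa using geom_sum_Ico_le_of_lt_one (m := 1) hr₀ hr₁
  calc ∑ j ∈ (range n).erase i, r ^ Nat.dist j i
      ≤ ∑ j ∈ range i ∪ Ico (i + 1) n, r ^ Nat.dist j i :=
        sum_le_sum_of_subset_of_nonneg hsplit fun _ _ _ => by positivity
    _ ≤ ∑ j ∈ range i, r ^ Nat.dist j i + ∑ j ∈ Ico (i + 1) n, r ^ Nat.dist j i :=
        (sum_union (disjoint_left.mpr fun j h₁ h₂ => by
          simp only [mem_range, mem_Ico] at h₁ h₂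
          omega)).le
    _ ≤ 2 * (r / (1 - r)) := by linarith

lemma one_add_half_mul_sum_exp_erase_le {m : ℕ → ℝ} {n i : ℕ}
    (hm : ∀ j < n, m j + Real.log 4 * Nat.dist j i ≤ m i) :
    (1 + 1 / 2) * ∑ j ∈ (range n).erase i, Real.exp (m j) ≤ Real.exp (m i) := by
  have hterm : ∀ j < n, Real.exp (m j) ≤ (1 / 4) ^ Nat.dist j i * Real.exp (m i) := by
    intro j hj
    rw [one_div, inv_pow, inv_mul_eq_div, le_div_iff₀ (by positivity), ← Real.exp_log
      (by norm_num : (0 : ℝ) < 4), ← Real.exp_nat_mul, ← Real.exp_add]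
    exact Real.exp_le_exp.mpr (by linarith [hm j hj])
  calc (1 + 1 / 2) * ∑ j ∈ (range n).erase i, Real.exp (m j)
      ≤ (1 + 1 / 2) * ∑ j ∈ (range n).erase i, (1 / 4) ^ Nat.dist j i * Real.exp (m i) := by
        gcongr with j hj
        exact hterm j (mem_range.mp (mem_of_mem_erase hj))
    _ = (1 + 1 / 2) * (∑ j ∈ (range n).erase i, (1 / 4 : ℝ) ^ Nat.dist j i) * Real.exp (m i) := by
        rw [← sum_mul, mul_assoc]
    _ ≤ (1 + 1 / 2) * (2 * ((1 / 4) / (1 - 1 / 4))) * Real.exp (m i) := by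
        gcongr
        exact sum_erase_pow_dist_le (by norm_num) (by norm_num) n i
    _ = Real.exp (m i) := by ring

/-- If `−u` lies outside the `(ln 4)·Θ`-neighbourhood of every slope `s_j` of
the least concave majorant `φ_0` of the points `(Re λ_j, ln|a_j|)`, then `u` lies in the domain
of single-term dominance of `y(z) = Σ_j a_j e^{λ_j z}` on the real line. -/
theorem stmt_8 (k : ℕ) (hk : 2 ≤ k) (l : ℕ → ℂ)
    (hmono : ∀ j, j + 1 < k → (l j).re < (l (j + 1)).re)
    (a : ℕ → ℂ) (ha : ∀ j < k, a j ≠ 0)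
    (Θ : ℝ)
    (hΘ : Θ = (Finset.range (k - 1)).sup' (Finset.nonempty_range_iff.mpr (by omega))
      fun j => ((l (j + 1)).re - (l j).re)⁻¹)
    (u : ℝ)
    (h : ∀ j, j + 1 < k →
      Real.log 4 * Θ <
        |(-u) -
          (leastConcaveMajorant ((l 0).re) ((l (k - 1)).re) k (fun j => (l j).re)
              (fun j => Real.log ‖a j‖) ((l (j + 1)).re)
           - leastConcaveMajorant ((l 0).re) ((l (k - 1)).re) k (fun j => (l j).re)
              (fun j => Real.log ‖a j‖) ((l j).re))
          / ((l (j + 1)).re - (l j).re)|) :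
    ∃ i < k, ∃ ε : ℝ, 0 < ε ∧
      (1 + ε) * ∑ j ∈ (Finset.range k).erase i,
          ‖a j * Complex.exp (l j * (u : ℂ))‖
        ≤ ‖a i * Complex.exp (l i * (u : ℂ))‖ := by
  set X : ℕ → ℝ := fun j => (l j).re
  set φ := leastConcaveMajorant (X 0) (X (k - 1)) k X (fun j => Real.log ‖a j‖)
  set m : ℕ → ℝ := fun j => Real.log ‖a j‖ + u * X j
  have hk₀ : 0 < k := by omega
  have hXmem : ∀ j < k, X j ∈ Set.Icc (X 0) (X (k - 1)) := fun j => mem_Icc_of_lt_succ hmono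
  have hgap : ∀ t, t + 1 < k →
      Real.log 4 ≤ |slope φ (X t) (X (t + 1)) + u| * (X (t + 1) - X t) := by
    intro t ht
    refine le_abs_mul_of_inv_le_of_mul_lt (Real.log_pos (by norm_num)).le (sub_pos.mpr (hmono t ht))
      (hΘ ▸ le_sup' (fun j => ((l (j + 1)).re - (l j).re)⁻¹) (mem_range.mpr (by omega))) ?_
    rw [slope_def_field, ← abs_neg]
    convert h t ht using 2
    ring
  obtain ⟨i, hik, hpeak⟩ := exists_peak_of_concaveOn hk₀ (concaveOn_leastConcaveMajorant hk₀)
    hXmem hmono u hgap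
  obtain ⟨j₀, hj₀, hj₀max⟩ := exists_max_image (range k) m (nonempty_range_iff.mpr hk₀.ne')
  have htop : φ (X i) + u * X i ≤ m j₀ :=
    leastConcaveMajorant_add_mul_le hk₀ (hXmem i hik) fun j hj => hj₀max j (mem_range.mpr hj)
  have hmaj : ∀ j < k, Real.log ‖a j‖ ≤ φ (X j) := fun j hj =>
    le_leastConcaveMajorant (x := X) (y := fun j => Real.log ‖a j‖) hj
  have hdom := add_mul_dist_le_of_le_of_peak (Real.log_pos (by norm_num))
    (fun j hj => by linarith [hmaj j hj]) hpeak ⟨j₀, mem_range.mp hj₀, htop⟩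
  have hnorm : ∀ j < k, ‖a j * Complex.exp (l j * u)‖ = Real.exp (m j) := by
    intro j hj
    rw [norm_mul, Complex.norm_exp, Real.exp_add, Real.exp_log (norm_pos_iff.mpr (ha j hj))]
    simp [X, mul_comm]
  refine ⟨i, hik, 1 / 2, by norm_num, ?_⟩
  rw [sum_congr rfl fun j hj => hnorm j (mem_range.mp (mem_of_mem_erase hj)), hnorm i hik]
  exact one_add_half_mul_sum_exp_erase_le hdom
end
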